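/- Let a, b, c > 0 with a² = bc, and consider the (right-angled) triangle in ℝ² with vertices A = (0, a), B = (−b, 0), C = (c, 0), with b ≠ c. Then there do NOT exist a point O ∈ ℝ², a constant m, and c₀ > 0 such that W(P) = c₀·dist(P, O)² + m for all P; i.e. the loci {P : W(P) = k} are never circles for such a triangle. -/

import Mathlib

/-!
Since `a² = bc`, the legs `CA` and `AB` are perpendicular lines through `A`, so by Pythagoras
`dist(P, CA)² + dist(P, AB)² = dist(P, A)²`. With `P = (x, y)` this gives
`W(P) = y² + x² + (y - a)²`, whose quadratic part `x² + 2y²` is not a multiple of `x² + y²`.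
-/
noncomputable section

/-- The point `(x, y)` of the Euclidean plane `ℝ²`. -/
def pt (x y : ℝ) : EuclideanSpace ℝ (Fin 2) :=
  (WithLp.equiv 2 (Fin 2 → ℝ)).symm ![x, y]

/-- The line through `X` and `Y`, i.e. the affine span of `{X, Y}`, as a set. -/
def lineThrough (X Y : EuclideanSpace ℝ (Fin 2)) : Set (EuclideanSpace ℝ (Fin 2)) :=
  (affineSpan ℝ {X, Y} : AffineSubspace ℝ (EuclideanSpace ℝ (Fin 2)))

/-- The distance sum function of the triangle `ABC`:
`V(P) = dist(P, line BC) + dist(P, line CA) + dist(P, line AB)`. -/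
def vSum (A B C P : EuclideanSpace ℝ (Fin 2)) : ℝ :=
  Metric.infDist P (lineThrough B C) + Metric.infDist P (lineThrough C A) +
    Metric.infDist P (lineThrough A B)

/-- The squared-distance sum function of the triangle `ABC`:
`W(P) = dist(P, line BC)² + dist(P, line CA)² + dist(P, line AB)²`. -/
def wSum (A B C P : EuclideanSpace ℝ (Fin 2)) : ℝ :=
  Metric.infDist P (lineThrough B C) ^ 2 + Metric.infDist P (lineThrough C A) ^ 2 +
    Metric.infDist P (lineThrough A B) ^ 2

open EuclideanGeometry

lemma EuclideanGeometry.infDist_eq_dist_of_mem_of_vsub_mem_orthogonal {V P : Type*}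
    [NormedAddCommGroup V] [InnerProductSpace ℝ V] [MetricSpace P] [NormedAddTorsor V P]
    {s : AffineSubspace ℝ P} [s.direction.HasOrthogonalProjection] {p q : P}
    (hq : q ∈ s) (hpq : p -ᵥ q ∈ s.directionᗮ) :
    Metric.infDist p s = dist p q := by
  have : Nonempty s := ⟨⟨q, hq⟩⟩
  rw [← dist_orthogonalProjection_eq_infDist, coe_orthogonalProjection_eq_iff_mem.2 ⟨hq, hpq⟩]

@[simp] lemma pt_apply_zero (x y : ℝ) : pt x y 0 = x := rfl
@[simp] lemma pt_apply_one (x y : ℝ) : pt x y 1 = y := rfl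

lemma dist_pt_sq (x y : ℝ) (O : EuclideanSpace ℝ (Fin 2)) :
    dist (pt x y) O ^ 2 = (x - O 0) ^ 2 + (y - O 1) ^ 2 := by
  rw [EuclideanSpace.dist_eq, Real.sq_sqrt (by positivity)]
  simp [Fin.sum_univ_two, Real.dist_eq, sq_abs]

lemma lineMap_pt (x₁ y₁ x₂ y₂ t : ℝ) :
    AffineMap.lineMap (pt x₁ y₁) (pt x₂ y₂) t = pt (x₁ + t * (x₂ - x₁)) (y₁ + t * (y₂ - y₁)) := by
  ext i; fin_cases i <;> simp [AffineMap.lineMap_apply_module'] <;> ring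

lemma inner_pt (x₁ y₁ x₂ y₂ : ℝ) : inner ℝ (pt x₁ y₁) (pt x₂ y₂) = x₁ * x₂ + y₁ * y₂ := by
  simp [EuclideanSpace.inner_eq_star_dotProduct, dotProduct, Fin.sum_univ_two, pt]
  ring

lemma pt_sub_pt (x₁ y₁ x₂ y₂ : ℝ) : pt x₁ y₁ - pt x₂ y₂ = pt (x₁ - x₂) (y₁ - y₂) := by
  ext i; fin_cases i <;> simp

lemma infDist_pt_lineThrough_sq (x y x₁ y₁ x₂ y₂ : ℝ)
    (h : 0 < (x₂ - x₁) ^ 2 + (y₂ - y₁) ^ 2) :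
    Metric.infDist (pt x y) (lineThrough (pt x₁ y₁) (pt x₂ y₂)) ^ 2 =
      ((x - x₁) * (y₂ - y₁) - (y - y₁) * (x₂ - x₁)) ^ 2 / ((x₂ - x₁) ^ 2 + (y₂ - y₁) ^ 2) := by
  obtain ⟨t, ht⟩ : ∃ t, t * ((x₂ - x₁) ^ 2 + (y₂ - y₁) ^ 2) =
      (x - x₁) * (x₂ - x₁) + (y - y₁) * (y₂ - y₁) :=
    ⟨_, div_mul_cancel₀ _ h.ne'⟩
  have hfoot : Metric.infDist (pt x y) (lineThrough (pt x₁ y₁) (pt x₂ y₂)) =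
      dist (pt x y) (AffineMap.lineMap (pt x₁ y₁) (pt x₂ y₂) t) := by
    apply infDist_eq_dist_of_mem_of_vsub_mem_orthogonal
      (AffineMap.lineMap_mem_affineSpan_pair t _ _)
    rw [direction_affineSpan, vectorSpan_pair, Submodule.mem_orthogonal_singleton_iff_inner_right,
      lineMap_pt, vsub_eq_sub, vsub_eq_sub, pt_sub_pt, pt_sub_pt, inner_pt]
    linear_combination ht
  rw [hfoot, lineMap_pt, dist_pt_sq, pt_apply_zero, pt_apply_one, eq_div_iff h.ne']
  linear_combination (t * ((x₂ - x₁) ^ 2 + (y₂ - y₁) ^ 2)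
    - ((x - x₁) * (x₂ - x₁) + (y - y₁) * (y₂ - y₁))) * ht

lemma wSum_pt_of_sq_eq_mul {a b c : ℝ} (hb : 0 < b) (hc : 0 < c)
    (habc : a ^ 2 = b * c) (x y : ℝ) :
    wSum (pt 0 a) (pt (-b) 0) (pt c 0) (pt x y) = y ^ 2 + (x ^ 2 + (y - a) ^ 2) := by
  rw [wSum, infDist_pt_lineThrough_sq _ _ _ _ _ _ (by nlinarith),
    infDist_pt_lineThrough_sq _ _ _ _ _ _ (by nlinarith),
    infDist_pt_lineThrough_sq _ _ _ _ _ _ (by nlinarith)]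
  simp only [sub_zero, zero_sub, sub_neg_eq_add, neg_sq, mul_zero]
  have hBC : (y * (c + b)) ^ 2 / ((c + b) ^ 2 + 0 ^ 2) = y ^ 2 := by
    field_simp
    ring
  have hlegs : ((x - c) * a - y * -c) ^ 2 / (c ^ 2 + a ^ 2) +
      (x * -a - (y - a) * -b) ^ 2 / (b ^ 2 + a ^ 2) = x ^ 2 + (y - a) ^ 2 := by
    rw [habc, div_add_div _ _ (by positivity) (by positivity), div_eq_iff (by positivity)]
    linear_combination (b + c) * (b * (x - c) ^ 2 + c * x ^ 2 + 2 * b * c * x - b * c ^ 2) * habc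
  rw [hBC, add_assoc, hlegs]

lemma not_exists_sq_add_sq_eq_mul_dist_sq (a : ℝ) :
    ¬ ∃ (p q c₀ m : ℝ), ∀ x y : ℝ,
      y ^ 2 + (x ^ 2 + (y - a) ^ 2) = c₀ * ((x - p) ^ 2 + (y - q) ^ 2) + m := by
  rintro ⟨p, q, c₀, m, h⟩
  -- second differences: `2 = 2 c₀` in the `x`-direction, `4 = 2 c₀` in the `y`-direction
  linarith [h 0 0, h 1 0, h (-1) 0, h 0 1, h 0 (-1)]

theorem stmt_16_general (a b c : ℝ) (hb : 0 < b) (hc : 0 < c)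
    (habc : a ^ 2 = b * c) :
    ¬ ∃ (O : EuclideanSpace ℝ (Fin 2)) (c₀ m : ℝ), 0 < c₀ ∧
        ∀ P : EuclideanSpace ℝ (Fin 2),
          wSum (pt 0 a) (pt (-b) 0) (pt c 0) P = c₀ * dist P O ^ 2 + m := by
  rintro ⟨O, c₀, m, -, hW⟩
  refine not_exists_sq_add_sq_eq_mul_dist_sq a ⟨O 0, O 1, c₀, m, fun x y => ?_⟩
  rw [← wSum_pt_of_sq_eq_mul hb hc habc, ← dist_pt_sq]
  exact hW (pt x y)

/-- The right-angled case `a² = bc` (with `b ≠ c`) in the proof of Conclusion 1: for the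
triangle with vertices `(0,a)`, `(−b,0)`, `(c,0)` the loci `{W = k}` are never circles. -/
theorem stmt_16 (a b c : ℝ) (ha : 0 < a) (hb : 0 < b) (hc : 0 < c)
    (habc : a ^ 2 = b * c) (hbc : b ≠ c) :
    ¬ ∃ (O : EuclideanSpace ℝ (Fin 2)) (c₀ m : ℝ), 0 < c₀ ∧
        ∀ P : EuclideanSpace ℝ (Fin 2),
          wSum (pt 0 a) (pt (-b) 0) (pt c 0) P = c₀ * dist P O ^ 2 + m :=
  stmt_16_general a b c hb hc habc
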